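/- For the cycle graph C_n on n ≥ 3 vertices, the resistance curvature is constant equal to 6/(n²−1): the vector κ with κ_i = 6/(n²−1) for all i satisfies Ω κ = 1. -/

import Mathlib

open Finset SimpleGraph Matrix

/-- The resistance matrix of a graph: `Ω i j = Γ⁻¹ i i + Γ⁻¹ j j - 2 Γ⁻¹ i j`
where `Γ = L + (1/n) J` with `L` the Laplacian and `J` the all-ones matrix. -/
noncomputable def resistanceMatrix {V : Type*} [Fintype V] [DecidableEq V]
    (G : SimpleGraph V) [DecidableRel G.Adj] : Matrix V V ℝ :=
  Matrix.of fun i j =>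
    letI Γinv := (G.lapMatrix ℝ + Matrix.of fun _ _ => (1 : ℝ) / Fintype.card V)⁻¹
    Γinv i i + Γinv j j - 2 * Γinv i j

/-! The matrix `Γ = L + J/n` fixes the all-ones vector, so `Γ⁻¹` has row sums `1` and the row
sums of `Ω` are `n Γ⁻¹ᵢᵢ + tr Γ⁻¹ - 2`. For a graph whose `Γ⁻¹` has constant diagonal `δ`
this is `2 (n δ - 1)` in every row, so the curvature is constant. For the cycle `C_N`, `Γ⁻¹` is
the circulant matrix of the discrete Green's function `g(x) = δ - x (N - x) / (2N)`: the
quadratic `x (N - x)` has second difference `-2` except at `x = 0`, where it picks up the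
wrap-around, so `L g = e₀ - 1/N`, and the choice `δ = (1 + (N² - 1)/12)/N` makes `∑ g = 1`.
Then `2 (N δ - 1) = (N² - 1)/6`. -/

section Resistance

variable {V : Type*} [Fintype V] [DecidableEq V] (G : SimpleGraph V) [DecidableRel G.Adj]

namespace SimpleGraph

noncomputable def gammaMatrix : Matrix V V ℝ :=
  G.lapMatrix ℝ + Matrix.of fun _ _ => (1 : ℝ) / Fintype.card V

theorem gammaMatrix_mulVec_one [Nonempty V] :
    G.gammaMatrix *ᵥ (fun _ => 1) = fun _ => 1 := by
  rw [gammaMatrix, add_mulVec, lapMatrix_mulVec_const_eq_zero, zero_add]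
  ext i
  simp [mulVec, dotProduct]

end SimpleGraph

theorem resistanceMatrix_apply (i j : V) :
    resistanceMatrix G i j =
      G.gammaMatrix⁻¹ i i + G.gammaMatrix⁻¹ j j - 2 * G.gammaMatrix⁻¹ i j :=
  rfl

theorem resistanceMatrix_mulVec_const [Nonempty V] {M : Matrix V V ℝ}
    (hM : G.gammaMatrix * M = 1) {δ : ℝ} (hdiag : ∀ i, M i i = δ) (c : ℝ) :
    resistanceMatrix G *ᵥ (fun _ => c) = fun _ => 2 * c * (Fintype.card V * δ - 1) := by
  have hinv : G.gammaMatrix⁻¹ = M := inv_eq_right_inv hM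
  have hrow : M *ᵥ (fun _ => 1) = fun _ => 1 := by
    conv_lhs => rw [← G.gammaMatrix_mulVec_one]
    rw [mulVec_mulVec, mul_eq_one_comm.mp hM, one_mulVec]
  ext i
  have hrow_i : ∑ j, M i j = 1 := by simpa [mulVec, dotProduct] using congrFun hrow i
  simp only [mulVec, dotProduct, resistanceMatrix_apply, hinv, hdiag, ← sum_mul,
    sum_sub_distrib, sum_add_distrib, ← mul_sum, hrow_i, sum_const, card_univ, nsmul_eq_mul]
  ring

end Resistance

theorem sum_range_mul_sub (N k : ℕ) :
    ∑ d ∈ range k, (d : ℝ) * (N - d) = k * (k - 1) * (3 * N - 2 * k + 1) / 6 := by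
  induction k with
  | zero => simp
  | succ k ih => rw [sum_range_succ, ih]; push_cast; ring

noncomputable def cycleGreen (N : ℕ) (x : Fin N) : ℝ :=
  (1 + ((N : ℝ) ^ 2 - 1) / 12) / N - x * (N - x) / (2 * N)

theorem cycleGreen_zero (N : ℕ) [NeZero N] :
    cycleGreen N 0 = (1 + ((N : ℝ) ^ 2 - 1) / 12) / N := by
  simp [cycleGreen]

theorem sum_cycleGreen (N : ℕ) [NeZero N] : ∑ x, cycleGreen N x = 1 := by
  have hN : (N : ℝ) ≠ 0 := NeZero.ne _
  simp only [cycleGreen, sum_sub_distrib, sum_const, card_univ, Fintype.card_fin, nsmul_eq_mul,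
    ← sum_div, Fin.sum_univ_eq_sum_range (fun d => (d : ℝ) * (N - d)), sum_range_mul_sub]
  field_simp
  ring

theorem cycleGreen_second_diff (n : ℕ) (x : Fin (n + 1)) :
    2 * cycleGreen (n + 1) x - cycleGreen (n + 1) (x - 1) - cycleGreen (n + 1) (x + 1)
      = (if x = 0 then 1 else 0) - 1 / (n + 1 : ℕ) := by
  have hN : ((n + 1 : ℕ) : ℝ) ≠ 0 := by positivity
  simp only [cycleGreen, Fin.coe_sub_one, Fin.val_add_one]
  split_ifs with h0 hlast hlast
  · subst h0
    obtain rfl : n = 0 := by simpa using congrArg Fin.val hlast.symm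
    norm_num
  · subst h0
    simp only [Fin.val_zero]
    push_cast
    field_simp
    ring
  · have h1 : 1 ≤ (x : ℕ) := Nat.one_le_iff_ne_zero.mpr (Fin.val_ne_zero_iff.mpr h0)
    rw [Nat.cast_sub h1, hlast, Fin.val_last]
    push_cast
    field_simp
    ring
  · have h1 : 1 ≤ (x : ℕ) := Nat.one_le_iff_ne_zero.mpr (Fin.val_ne_zero_iff.mpr h0)
    rw [Nat.cast_sub h1]
    push_cast
    field_simp
    ring

namespace SimpleGraph

theorem cycleGraph_lapMatrix_mulVec_apply (n : ℕ) (v : Fin (n + 3) → ℝ) (i : Fin (n + 3)) :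
    ((cycleGraph (n + 3)).lapMatrix ℝ *ᵥ v) i = 2 * v i - v (i - 1) - v (i + 1) := by
  have hne : i - 1 ≠ i + 1 := by
    rw [sub_eq_add_neg, Ne, add_right_inj, neg_eq_iff_add_eq_zero, Fin.ext_iff]
    simp [Fin.val_add, Nat.mod_eq_of_lt]
  rw [lapMatrix_mulVec_apply, cycleGraph_degree_three_le, cycleGraph_neighborFinset,
    sum_pair hne]
  push_cast
  ring

theorem cycleGraph_gammaMatrix_mul_circulant (n : ℕ) :
    (cycleGraph (n + 3)).gammaMatrix * circulant (cycleGreen (n + 3)) = 1 := by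
  ext i k
  have hJ : ∑ j, (1 : ℝ) / Fintype.card (Fin (n + 3)) * cycleGreen (n + 3) (j - k)
      = 1 / (n + 3 : ℕ) := by
    rw [← mul_sum, show ∑ j, cycleGreen (n + 3) (j - k) = ∑ x, cycleGreen (n + 3) x from
      (Equiv.subRight k).sum_comp _, sum_cycleGreen, Fintype.card_fin, mul_one]
  have hL : ((cycleGraph (n + 3)).lapMatrix ℝ * circulant (cycleGreen (n + 3))) i k
      = (if i = k then 1 else 0) - 1 / (n + 3 : ℕ) := by
    change ((cycleGraph (n + 3)).lapMatrix ℝ *ᵥ fun j => cycleGreen (n + 3) (j - k)) i = _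
    rw [cycleGraph_lapMatrix_mulVec_apply, sub_right_comm i 1 k, add_sub_right_comm i 1 k,
      cycleGreen_second_diff (n + 2)]
    simp only [sub_eq_zero]
  rw [gammaMatrix, add_mul, Matrix.add_apply, hL, one_apply]
  simp only [mul_apply, of_apply, circulant_apply]
  rw [hJ]
  ring

end SimpleGraph

/-- The cycle graph `C n` (`n ≥ 3`) has constant resistance curvature `6/(n²-1)`:
the constant vector `6/(n²-1)` solves `Ω κ = 1`. -/
theorem cycleGraph_constant_curvature (n : ℕ) (hn : 3 ≤ n) :
    resistanceMatrix (SimpleGraph.cycleGraph n) *ᵥ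
        (fun _ => (6 : ℝ) / ((n : ℝ) ^ 2 - 1)) = fun _ => 1 := by
  obtain ⟨m, rfl⟩ : ∃ m, n = m + 3 := ⟨n - 3, by omega⟩
  rw [resistanceMatrix_mulVec_const _ (cycleGraph_gammaMatrix_mul_circulant m)
    (fun _ => by rw [circulant_apply, sub_self]), cycleGreen_zero, Fintype.card_fin]
  have hsq : ((m + 3 : ℕ) : ℝ) ^ 2 - 1 ≠ 0 := by
    have : (3 : ℝ) ≤ (m + 3 : ℕ) := by exact_mod_cast Nat.le_add_left 3 m
    nlinarith
  ext
  field_simp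
  ring
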